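/- arXiv:2304.09262 — 2 statements merged into one kernel-verified Lean document; each statement's English description precedes it below -/
import Mathlib

section
/- With uncertain endowment and log-concave g, the Dye-weighted truncated expectation M(v̄) = ((1-p)μ + p∫_{v_min}^{v̄} t g(t)dt)/((1-p)+pG(v̄)) is differentiable with derivative M'(v̄) = pg(v̄)(v̄ - M(v̄))/((1-p)+pG(v̄)), and M'(v̄) < 1 for all v̄ ∈ (v_min, v_max) and all p ∈ (0,1). -/
/-!
Write `N` and `D` for the numerator and denominator of `M`. Since `N' = v̄ D'`, the quotient rule
gives `M' = D' (v̄ - M) / D`. For the bound, `v̄ D - N = (1 - p)(v̄ - μ) + p H` with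
`H = v̄ G(v̄) - ∫_{v_min}^{v̄} t g(t) dt = ∫_{v_min}^{v̄} G`, and `v̄ - μ ≤ H`, so it suffices that
`g(v̄) H ≤ G(v̄)²`: then `p g(v̄) (v̄ D - N) ≤ p G(v̄)² < G(v̄)² ≤ D²`. That inequality comes from
integrating `g(v̄) G(t) ≤ g(t) G(v̄)` over `t ≤ v̄` (log-concavity of `G`), which in turn is
log-concavity of `g` in the form `g(s) g(v̄) ≤ g(t) g(s + v̄ - t)` for `s ≤ t ≤ v̄`, integrated over
`s ∈ [v_min, t]`.
-/

open Set MeasureTheory intervalIntegral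

def LogConcaveOn (S : Set ℝ) (g : ℝ → ℝ) : Prop :=
  ∀ x ∈ S, ∀ y ∈ S, ∀ a b : ℝ, 0 ≤ a → 0 ≤ b → a + b = 1 → g x ^ a * g y ^ b ≤ g (a * x + b * y)

theorem LogConcaveOn.mul_le_mul_of_le_of_le {S : Set ℝ} {g : ℝ → ℝ} (hg : LogConcaveOn S g)
    {s t v : ℝ} (hs : s ∈ S) (hv : v ∈ S) (hgs : 0 < g s) (hgv : 0 < g v)
    (hst : s ≤ t) (htv : t ≤ v) :
    g s * g v ≤ g t * g (s + v - t) := by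
  rcases (hst.trans htv).eq_or_lt with rfl | hsv
  · obtain rfl : t = s := le_antisymm htv hst
    simp
  -- `t` and `s + v - t` are the convex combinations of `s, v` with swapped weights `a, b`.
  set a := (v - t) / (v - s)
  set b := (t - s) / (v - s)
  have hvs : v - s ≠ 0 := (sub_pos.2 hsv).ne'
  have ha : 0 ≤ a := div_nonneg (by linarith) (by linarith)
  have hb : 0 ≤ b := div_nonneg (by linarith) (by linarith)
  have hab : a + b = 1 := by simp only [a, b]; field_simp; ring
  have ht : a * s + b * v = t := by simp only [a, b]; field_simp; ring
  have ht' : b * s + a * v = s + v - t := by simp only [a, b]; field_simp; ring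
  have h₁ : g s ^ a * g v ^ b ≤ g t := ht ▸ hg s hs v hv a b ha hb hab
  have h₂ : g s ^ b * g v ^ a ≤ g (s + v - t) := ht' ▸ hg s hs v hv b a hb ha (by linarith)
  calc g s * g v = (g s ^ a * g v ^ b) * (g s ^ b * g v ^ a) := by
        rw [mul_mul_mul_comm, ← Real.rpow_add hgs, mul_comm (g v ^ b),
          ← Real.rpow_add hgv, hab, Real.rpow_one, Real.rpow_one]
    _ ≤ g t * g (s + v - t) :=
        mul_le_mul h₁ h₂ (by positivity) ((by positivity : 0 ≤ g s ^ a * g v ^ b).trans h₁)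

theorem LogConcaveOn.mul_integral_le_mul_integral {a b t v : ℝ} {g : ℝ → ℝ}
    (hg : LogConcaveOn (Icc a b) g) (hgi : IntervalIntegrable g volume a b)
    (hpos : ∀ x ∈ Icc a b, 0 < g x) (hat : a ≤ t) (htv : t ≤ v) (hvb : v ≤ b) :
    g v * ∫ s in a..t, g s ≤ g t * ∫ s in a..v, g s := by
  have hsub : ∀ c ∈ Icc a b, ∀ d ∈ Icc a b, IntervalIntegrable g volume c d :=
    fun c hc d hd => hgi.mono_set ((uIcc_subset_Icc hc hd).trans Icc_subset_uIcc)
  have hIcc : ∀ x ∈ Icc a v, x ∈ Icc a b := fun x hx => ⟨hx.1, hx.2.trans hvb⟩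
  have haI := hIcc a ⟨le_rfl, hat.trans htv⟩
  have htI := hIcc t ⟨hat, htv⟩
  have hvI := hIcc v ⟨hat.trans htv, le_rfl⟩
  have hshift_int : IntervalIntegrable (fun s => g (s + (v - t))) volume a t := by
    simpa using (hsub (a + (v - t)) (hIcc _ ⟨by linarith, by linarith⟩) v hvI).comp_add_right (v - t)
  have hshift : ∫ s in a..t, g (s + (v - t)) ≤ ∫ s in a..v, g s := by
    rw [integral_comp_add_right, show t + (v - t) = v by ring]
    exact integral_mono_interval (by linarith) (by linarith) le_rfl
      ((ae_restrict_mem measurableSet_Ioc).mono fun x hx =>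
        (hpos x (hIcc x (Ioc_subset_Icc_self hx))).le) (hsub a haI v hvI)
  calc g v * ∫ s in a..t, g s = ∫ s in a..t, g v * g s :=
        (intervalIntegral.integral_const_mul _ _).symm
    _ ≤ ∫ s in a..t, g t * g (s + (v - t)) :=
        integral_mono_on hat ((hsub a haI t htI).const_mul _) (hshift_int.const_mul _)
          fun s hs => by
            have hsI := hIcc s ⟨hs.1, hs.2.trans htv⟩
            rw [mul_comm, ← add_sub_assoc]
            exact hg.mul_le_mul_of_le_of_le hsI hvI (hpos s hsI) (hpos v hvI) hs.2 htv
    _ = g t * ∫ s in a..t, g (s + (v - t)) := intervalIntegral.integral_const_mul _ _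
    _ ≤ g t * ∫ s in a..v, g s := by gcongr; exact (hpos t htI).le

theorem LogConcaveOn.mul_integral_primitive_le_sq {a b v : ℝ} {g : ℝ → ℝ}
    (hg : LogConcaveOn (Icc a b) g) (hgi : IntervalIntegrable g volume a b)
    (hpos : ∀ x ∈ Icc a b, 0 < g x) (hav : a ≤ v) (hvb : v ≤ b) :
    g v * ∫ t in a..v, ∫ s in a..t, g s ≤ (∫ s in a..v, g s) ^ 2 := by
  have hgv : IntervalIntegrable g volume a v :=
    hgi.mono_set (by rw [uIcc_of_le hav, uIcc_of_le (hav.trans hvb)]; exact Icc_subset_Icc_right hvb)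
  have hprim : IntervalIntegrable (fun t => ∫ s in a..t, g s) volume a v :=
    (continuousOn_primitive_interval' hgv left_mem_uIcc).intervalIntegrable
  calc g v * ∫ t in a..v, ∫ s in a..t, g s = ∫ t in a..v, g v * ∫ s in a..t, g s :=
        (intervalIntegral.integral_const_mul _ _).symm
    _ ≤ ∫ t in a..v, g t * ∫ s in a..v, g s :=
        integral_mono_on hav (hprim.const_mul _) (hgv.mul_const _) fun t ht =>
          hg.mul_integral_le_mul_integral hgi hpos ht.1 ht.2 hvb
    _ = (∫ s in a..v, g s) ^ 2 := by rw [intervalIntegral.integral_mul_const, sq]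

theorem ContinuousOn.hasDerivAt_integral_right {a b x : ℝ} {f : ℝ → ℝ}
    (hf : ContinuousOn f (Icc a b)) (hx : x ∈ Ioo a b) :
    HasDerivAt (fun u => ∫ t in a..u, f t) (f x) x :=
  integral_hasDerivAt_right
    ((hf.mono (by rw [uIcc_of_le hx.1.le]; exact Icc_subset_Icc_right hx.2.le)).intervalIntegrable)
    (hf.mono Ioo_subset_Icc_self |>.stronglyMeasurableAtFilter isOpen_Ioo x hx)
    (hf.continuousAt (Icc_mem_nhds hx.1 hx.2))

theorem integral_primitive_eq_mul_integral_sub {a b : ℝ} {g : ℝ → ℝ}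
    (hg : ContinuousOn g (Icc a b)) (hab : a ≤ b) :
    ∫ t in a..b, ∫ s in a..t, g s = b * (∫ s in a..b, g s) - ∫ t in a..b, t * g t := by
  have hgi : IntervalIntegrable g volume a b := hg.intervalIntegrable_of_Icc hab
  have hparts := integral_mul_deriv_eq_deriv_mul_of_hasDerivAt (u := id) (u' := fun _ => 1)
    (v := fun u => ∫ s in a..u, g s) continuousOn_id
    (continuousOn_primitive_interval' hgi left_mem_uIcc)
    (fun x _ => hasDerivAt_id x)
    (fun x hx => by
      rw [min_eq_left hab, max_eq_right hab] at hx; exact hg.hasDerivAt_integral_right hx)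
    intervalIntegrable_const hgi
  simp only [id, integral_same, mul_zero, sub_zero, one_mul] at hparts
  rw [hparts]
  ring

theorem mul_integral_sub_integral_mul_le {a b v : ℝ} {g : ℝ → ℝ} (hg : ContinuousOn g (Icc a b))
    (hnonneg : ∀ x ∈ Icc v b, 0 ≤ g x) (hav : a ≤ v) (hvb : v ≤ b) :
    v * (∫ t in a..b, g t) - ∫ t in a..b, t * g t ≤
      v * (∫ t in a..v, g t) - ∫ t in a..v, t * g t := by
  have hint : ∀ {f : ℝ → ℝ}, ContinuousOn f (Icc a b) → ∀ c ∈ Icc a b, ∀ d ∈ Icc a b,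
      IntervalIntegrable f volume c d :=
    fun hf c hc d hd => (hf.mono (uIcc_subset_Icc hc hd)).intervalIntegrable
  have hexpand : ∀ c ∈ Icc a b, ∀ d ∈ Icc a b, ∫ t in c..d, (v - t) * g t =
      v * (∫ t in c..d, g t) - ∫ t in c..d, t * g t := fun c hc d hd => by
    simp_rw [sub_mul, ← intervalIntegral.integral_const_mul]
    exact integral_sub ((hint hg c hc d hd).const_mul v) (hint (continuousOn_id.mul hg) c hc d hd)
  have hw := hint (f := fun t => (v - t) * g t) ((continuousOn_const.sub continuousOn_id).mul hg)
  have ha : a ∈ Icc a b := ⟨le_rfl, hav.trans hvb⟩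
  have hv : v ∈ Icc a b := ⟨hav, hvb⟩
  have hb : b ∈ Icc a b := ⟨hav.trans hvb, le_rfl⟩
  have htail : ∫ t in v..b, (v - t) * g t ≤ 0 := by
    simpa using integral_mono_on hvb (hw v hv b hb) intervalIntegrable_const
      fun t ht => mul_nonpos_of_nonpos_of_nonneg (by linarith [ht.1]) (hnonneg t ht)
  rw [← hexpand a ha b hb, ← hexpand a ha v hv,
    ← integral_add_adjacent_intervals (hw a ha v hv) (hw v hv b hb)]
  linarith

theorem integral_pos_and_le_one_of_density {a b v : ℝ} {g : ℝ → ℝ}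
    (hg : ContinuousOn g (Icc a b)) (hpos : ∀ x ∈ Icc a b, 0 < g x) (hg1 : ∫ t in a..b, g t = 1)
    (hv : v ∈ Ioo a b) :
    0 < ∫ t in a..v, g t ∧ ∫ t in a..v, g t ≤ 1 := by
  refine ⟨intervalIntegral_pos_of_pos_on ?_ (fun x hx => hpos x ⟨hx.1.le, hx.2.le.trans hv.2.le⟩)
    hv.1, hg1 ▸ integral_mono_interval le_rfl hv.1.le hv.2.le ?_ ?_⟩
  · exact (hg.mono (Icc_subset_Icc_right hv.2.le)).intervalIntegrable_of_Icc hv.1.le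
  · exact (ae_restrict_mem measurableSet_Ioc).mono fun x hx => (hpos x ⟨hx.1.le, hx.2⟩).le
  · exact hg.intervalIntegrable_of_Icc (hv.1.trans hv.2).le

theorem HasDerivAt.div_of_num_deriv_eq_mul {N D : ℝ → ℝ} {d v : ℝ} (hN : HasDerivAt N (v * d) v)
    (hD : HasDerivAt D d v) (hDv : D v ≠ 0) :
    HasDerivAt (fun u => N u / D u) (d * (v - N v / D v) / D v) v :=
  (hN.div hD hDv).congr_deriv (by field_simp)

theorem dye_slope_lt_one {p g G I μ v : ℝ} (hp0 : 0 < p) (hp1 : p < 1) (hg : 0 ≤ g) (hG0 : 0 < G)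
    (hG1 : G ≤ 1) (hμ : v - μ ≤ v * G - I) (hgH : g * (v * G - I) ≤ G ^ 2) :
    p * g * (v - ((1 - p) * μ + p * I) / ((1 - p) + p * G)) / ((1 - p) + p * G) < 1 := by
  have hGD : G ≤ (1 - p) + p * G := by nlinarith
  have hD : 0 < (1 - p) + p * G := hG0.trans_le hGD
  have hnum : v * ((1 - p) + p * G) - ((1 - p) * μ + p * I) ≤ v * G - I := by nlinarith
  rw [div_lt_one hD, sub_div' hD.ne', mul_div_assoc', div_lt_iff₀ hD]
  calc p * g * (v * ((1 - p) + p * G) - ((1 - p) * μ + p * I)) ≤ p * (g * (v * G - I)) := by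
        rw [← mul_assoc]; gcongr
    _ ≤ p * G ^ 2 := by gcongr
    _ < G ^ 2 := by nlinarith [pow_pos hG0 2]
    _ ≤ ((1 - p) + p * G) * ((1 - p) + p * G) := by rw [sq]; gcongr

theorem dye_weighted_truncated_mean_slope_general
    (vmin vmax : ℝ)
    (g : ℝ → ℝ)
    (hg_cont : ContinuousOn g (Set.Icc vmin vmax))
    (hg_pos : ∀ x ∈ Set.Icc vmin vmax, 0 < g x)
    (hg_density : ∫ t in vmin..vmax, g t = 1)
    (hg_logconcave : ∀ x ∈ Set.Icc vmin vmax, ∀ y ∈ Set.Icc vmin vmax,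
      ∀ a b : ℝ, 0 ≤ a → 0 ≤ b → a + b = 1 →
        g x ^ a * g y ^ b ≤ g (a * x + b * y))
    (G : ℝ → ℝ) (hG : ∀ v, G v = ∫ t in vmin..v, g t)
    (μ : ℝ) (hμ : μ = ∫ t in vmin..vmax, t * g t) :
    ∀ p ∈ Set.Ioo (0:ℝ) 1,
      ∀ M : ℝ → ℝ,
        (∀ v, M v = ((1 - p) * μ + p * ∫ t in vmin..v, t * g t) / ((1 - p) + p * G v)) →
        ∀ v ∈ Set.Ioo vmin vmax,
          HasDerivAt M (p * g v * (v - M v) / ((1 - p) + p * G v)) v ∧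
          p * g v * (v - M v) / ((1 - p) + p * G v) < 1 := by
  rintro p ⟨hp0, hp1⟩ M hM v hv
  obtain ⟨hG0, hG1⟩ := hG v ▸ integral_pos_and_le_one_of_density hg_cont hg_pos hg_density hv
  have htg : ContinuousOn (fun t => t * g t) (Icc vmin vmax) := continuousOn_id.mul hg_cont
  have hD : (1 - p) + p * G v ≠ 0 := by nlinarith
  obtain rfl : M = fun u => ((1 - p) * μ + p * ∫ t in vmin..u, t * g t) / ((1 - p) + p * G u) :=
    funext hM
  refine ⟨HasDerivAt.div_of_num_deriv_eq_mul
    (((htg.hasDerivAt_integral_right hv).const_mul p).const_add _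
      |>.congr_deriv (by ring))
    (((funext hG ▸ hg_cont.hasDerivAt_integral_right hv).const_mul p).const_add _) hD, ?_⟩
  have hmean := mul_integral_sub_integral_mul_le hg_cont
    (fun x hx => (hg_pos x ⟨hv.1.le.trans hx.1, hx.2⟩).le) hv.1.le hv.2.le
  have hlc := LogConcaveOn.mul_integral_primitive_le_sq hg_logconcave
    (hg_cont.intervalIntegrable_of_Icc (hv.1.trans hv.2).le) hg_pos hv.1.le hv.2.le
  rw [hg_density, ← hμ, mul_one, ← hG] at hmean
  rw [integral_primitive_eq_mul_integral_sub (hg_cont.mono (Icc_subset_Icc_right hv.2.le)) hv.1.le,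
    ← hG] at hlc
  exact dye_slope_lt_one hp0 hp1 (hg_pos v ⟨hv.1.le, hv.2.le⟩).le hG0 hG1 hmean hlc

/-- the Dye-weighted truncated expectation
M(v̄) = ((1-p)μ + p∫_{v_min}^{v̄} t g)/((1-p)+pG(v̄)) is differentiable with
derivative pg(v̄)(v̄ − M(v̄))/((1-p)+pG(v̄)), which is less than 1. -/
theorem dye_weighted_truncated_mean_slope
    (vmin vmax : ℝ) (hv : vmin < vmax)
    (g : ℝ → ℝ)
    (hg_cont : ContinuousOn g (Set.Icc vmin vmax))
    (hg_pos : ∀ x ∈ Set.Icc vmin vmax, 0 < g x)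
    (hg_density : ∫ t in vmin..vmax, g t = 1)
    (hg_logconcave : ∀ x ∈ Set.Icc vmin vmax, ∀ y ∈ Set.Icc vmin vmax,
      ∀ a b : ℝ, 0 ≤ a → 0 ≤ b → a + b = 1 →
        g x ^ a * g y ^ b ≤ g (a * x + b * y))
    (G : ℝ → ℝ) (hG : ∀ v, G v = ∫ t in vmin..v, g t)
    (μ : ℝ) (hμ : μ = ∫ t in vmin..vmax, t * g t) :
    ∀ p ∈ Set.Ioo (0:ℝ) 1,
      ∀ M : ℝ → ℝ,
        (∀ v, M v = ((1 - p) * μ + p * ∫ t in vmin..v, t * g t) / ((1 - p) + p * G v)) →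
        ∀ v ∈ Set.Ioo vmin vmax,
          HasDerivAt M (p * g v * (v - M v) / ((1 - p) + p * G v)) v ∧
          p * g v * (v - M v) / ((1 - p) + p * G v) < 1 :=
  dye_weighted_truncated_mean_slope_general vmin vmax g hg_cont hg_pos hg_density hg_logconcave G hG
    μ hμ
end

section
/- The expected nondisclosure payoff at threshold v^B strictly exceeds v^B for q > 0: q·P^q(v^B, v̂=v^B) + (1-q)∫P^q(s, v̂=v^B)g(s)ds > v^B for all q ∈ (0,1), where P^q(v^B, v̂=v^B) = v^B; consequently the early disclosure threshold satisfies v^E > v^B. -/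
open intervalIntegral Set
open MeasureTheory (volume)

/-!
Write `R v = K v - v * D v` and `B v = ∫ s in v..vmax, (s - v) * g s`. Since
`R v = (1 - p) * (μ - v) + p * ∫ s in vmin..v, (s - v) * g s`, the gap `R` is antitone and
vanishes at the Dye threshold `vB`, so `R v ≥ 0` for `v ≤ vB`. Given the threshold `v`, the
nondisclosure price is affine in the signal on either side of `v`, with denominators
`E₁ = q + (1 - q) * D v > E₂ = q * (1 - p) + (1 - q) * D v`. The expected payoff minus `v` is
then a sum of nonnegative multiples of `R v` plus `q * (1 - p) * B v * (1 / E₂ - 1 / E₁) > 0`,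
the contribution of the jump of the price at `s = v`. So the expected payoff exceeds every
`v ≤ vB`, which gives the inequality at `vB` and rules out a fixed point `vE ≤ vB`.
-/

section Integrals

variable {g : ℝ → ℝ} {a b : ℝ}

theorem integral_eq_add_of_eqOn_uIoo {f f₁ f₂ : ℝ → ℝ} {v : ℝ}
    (h₁ : IntervalIntegrable f₁ volume a v) (h₂ : IntervalIntegrable f₂ volume v b)
    (hf₁ : EqOn f₁ f (uIoo a v)) (hf₂ : EqOn f₂ f (uIoo v b)) :
    ∫ s in a..b, f s = (∫ s in a..v, f₁ s) + ∫ s in v..b, f₂ s := by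
  rw [← integral_add_adjacent_intervals (h₁.congr_uIoo hf₁) (h₂.congr_uIoo hf₂),
    integral_congr_uIoo hf₁, integral_congr_uIoo hf₂]

theorem integral_affine_mul (c k : ℝ) (hg : ContinuousOn g (uIcc a b)) :
    ∫ s in a..b, (c * s + k) * g s = c * (∫ s in a..b, s * g s) + k * ∫ s in a..b, g s := by
  simp only [add_mul, mul_assoc]
  rw [integral_add, integral_const_mul, integral_const_mul]
  · exact (ContinuousOn.intervalIntegrable (by fun_prop)).const_mul c
  · exact hg.intervalIntegrable.const_mul k

theorem integral_sub_mul (v : ℝ) (hg : ContinuousOn g (uIcc a b)) :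
    ∫ s in a..b, (s - v) * g s = (∫ s in a..b, s * g s) - v * ∫ s in a..b, g s := by
  simpa [sub_eq_add_neg] using integral_affine_mul 1 (-v) hg

theorem antitoneOn_integral_sub_mul (hg : ContinuousOn g (Icc a b))
    (hg0 : ∀ s ∈ Icc a b, 0 ≤ g s) :
    AntitoneOn (fun v => ∫ s in a..v, (s - v) * g s) (Icc a b) := by
  intro v hv w hw hvw
  have hint : ∀ x ∈ Icc a b, ∀ y ∈ Icc a b, ∀ z : ℝ,
      IntervalIntegrable (fun s => (s - z) * g s) volume x y := fun x hx y hy z =>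
    ((continuousOn_id.sub continuousOn_const).mul
      (hg.mono (uIcc_subset_Icc hx hy))).intervalIntegrable
  have ha : a ∈ Icc a b := left_mem_Icc.2 (hv.1.trans hv.2)
  have hleft : ∫ s in a..v, (s - w) * g s ≤ ∫ s in a..v, (s - v) * g s :=
    integral_mono_on hv.1 (hint a ha v hv w) (hint a ha v hv v) fun s hs =>
      mul_le_mul_of_nonneg_right (by linarith) (hg0 s ⟨hs.1, hs.2.trans hv.2⟩)
  have hright : ∫ s in v..w, (s - w) * g s ≤ 0 := by
    simpa using integral_mono_on (g := fun _ => 0) hvw (hint v hv w hw w)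
      intervalIntegrable_const fun s hs => mul_nonpos_of_nonpos_of_nonneg
        (sub_nonpos.2 hs.2) (hg0 s ⟨hv.1.trans hs.1, hs.2.trans hw.2⟩)
  show ∫ s in a..w, (s - w) * g s ≤ ∫ s in a..v, (s - v) * g s
  rw [← integral_add_adjacent_intervals (hint a ha v hv w) (hint v hv w hw w)]
  linarith

end Integrals

theorem lt_expected_price_closed_form {p q v k d G₁ G₂ I₁ I₂ : ℝ}
    (hp : p ∈ Ioo (0:ℝ) 1) (hq : q ∈ Ioo (0:ℝ) 1) (hG₁ : 0 ≤ G₁) (hG₂ : 0 ≤ G₂) (hG : G₁ + G₂ = 1)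
    (hk : k = (1 - p) * (I₁ + I₂) + p * I₁) (hd : d = 1 - p + p * G₁)
    (hgap : v * d ≤ k) (hI₂ : v * G₂ < I₂) :
    v < q * ((q * v + (1 - q) * k) / (q + (1 - q) * d)) + (1 - q) *
      ((q * I₁ + (1 - q) * k * G₁) / (q + (1 - q) * d) +
        (q * (1 - p) * I₂ + (1 - q) * k * G₂) / (q * (1 - p) + (1 - q) * d)) := by
  obtain ⟨hp0, hp1⟩ := hp
  obtain ⟨hq0, hq1⟩ := hq
  have hq' : 0 < 1 - q := by linarith
  have hp' : 0 < 1 - p := by linarith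
  have hd0 : 0 < d := by rw [hd]; positivity
  -- `I₁ - v * G₁ = (k - v * d) - (1 - p) * (I₂ - v * G₂)` and `E₁ - E₂ = q * p`
  have key : q * ((q * v + (1 - q) * k) / (q + (1 - q) * d)) + (1 - q) *
      ((q * I₁ + (1 - q) * k * G₁) / (q + (1 - q) * d) +
        (q * (1 - p) * I₂ + (1 - q) * k * G₂) / (q * (1 - p) + (1 - q) * d)) - v =
      (1 - q) * ((k - v * d) * (2 * q + (1 - q) * G₁) / (q + (1 - q) * d)
        + (k - v * d) * ((1 - q) * G₂) / (q * (1 - p) + (1 - q) * d)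
        + q * (1 - p) * (I₂ - v * G₂) * (q * p)
          / ((q + (1 - q) * d) * (q * (1 - p) + (1 - q) * d))) := by
    obtain rfl : G₂ = 1 - G₁ := by linarith
    subst hk hd
    field_simp
    ring
  have hR : 0 ≤ k - v * d := sub_nonneg.2 hgap
  have hB : 0 < I₂ - v * G₂ := sub_pos.2 hI₂
  rw [← sub_pos, key]
  positivity

theorem integral_nondisclosure_price_mul {g : ℝ → ℝ} {a b v p q k d : ℝ} (f : ℝ → ℝ)
    (hf : ∀ s, f s = (q * s * (1 - p * (if v < s then 1 else 0)) + (1 - q) * k) /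
      (q * (1 - p * (if v < s then 1 else 0)) + (1 - q) * d))
    (hav : a ≤ v) (hvb : v ≤ b) (hg₁ : ContinuousOn g (uIcc a v))
    (hg₂ : ContinuousOn g (uIcc v b)) :
    ∫ s in a..b, f s * g s =
      (q * (∫ s in a..v, s * g s) + (1 - q) * k * ∫ s in a..v, g s) / (q + (1 - q) * d) +
      (q * (1 - p) * (∫ s in v..b, s * g s) + (1 - q) * k * ∫ s in v..b, g s) /
        (q * (1 - p) + (1 - q) * d) := by
  rw [integral_eq_add_of_eqOn_uIoo
      (f₁ := fun s => (q * s + (1 - q) * k) * g s / (q + (1 - q) * d))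
      (f₂ := fun s => (q * (1 - p) * s + (1 - q) * k) * g s / (q * (1 - p) + (1 - q) * d)),
    integral_div, integral_div, integral_affine_mul _ _ hg₁, integral_affine_mul _ _ hg₂]
  · exact (ContinuousOn.intervalIntegrable (by fun_prop)).div_const _
  · exact (ContinuousOn.intervalIntegrable (by fun_prop)).div_const _
  · intro s hs
    rw [uIoo_of_le hav] at hs
    simp [hf, hs.2.not_gt, div_mul_eq_mul_div]
  · intro s hs
    rw [uIoo_of_le hvb] at hs
    simp only [hf, hs.1, ↓reduceIte, mul_one, div_mul_eq_mul_div]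
    ring

section Model

variable {vmin vmax p q μ : ℝ} {g G K D : ℝ → ℝ}

theorem mul_D_le_K_of_le_benchmark (hp : p ∈ Ioo (0:ℝ) 1)
    (hg : ContinuousOn g (Icc vmin vmax)) (hg_pos : ∀ x ∈ Icc vmin vmax, 0 < g x)
    (hG : ∀ v, G v = ∫ t in vmin..v, g t)
    (hK : ∀ v, K v = (1 - p) * μ + p * ∫ t in vmin..v, t * g t)
    (hD : ∀ v, D v = 1 - p + p * G v)
    {vB : ℝ} (hvB_le : vB ≤ vmax) (hvB : vB = K vB / D vB) {v : ℝ} (hv : v ∈ Icc vmin vB) :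
    v * D v ≤ K v := by
  obtain ⟨hp0, hp1⟩ := hp
  have hvB_mem : vB ∈ Icc vmin vmax := ⟨hv.1.trans hv.2, hvB_le⟩
  have hv_mem : v ∈ Icc vmin vmax := ⟨hv.1, hv.2.trans hvB_le⟩
  have gap_eq : ∀ w ∈ Icc vmin vmax,
      K w - w * D w = (1 - p) * (μ - w) + p * ∫ s in vmin..w, (s - w) * g s := fun w hw => by
    rw [hK, hD, hG,
      integral_sub_mul w (hg.mono (uIcc_subset_Icc (left_mem_Icc.2 (hw.1.trans hw.2)) hw))]
    ring
  have hDvB : 0 < D vB := by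
    have hGvB : 0 ≤ G vB := by
      rw [hG]
      exact integral_nonneg hvB_mem.1 fun s hs => (hg_pos s ⟨hs.1, hs.2.trans hvB_le⟩).le
    rw [hD]
    nlinarith
  have hgapB : K vB - vB * D vB = 0 := by
    rw [sub_eq_zero, ← div_eq_iff hDvB.ne', ← hvB]
  have hmono : ∫ s in vmin..vB, (s - vB) * g s ≤ ∫ s in vmin..v, (s - v) * g s :=
    antitoneOn_integral_sub_mul hg (fun s hs => (hg_pos s hs).le) hv_mem hvB_mem hv.2
  rw [← sub_nonneg, gap_eq v hv_mem, ← hgapB, gap_eq vB hvB_mem]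
  gcongr
  exact hv.2

theorem lt_expected_nondisclosure_price (hp : p ∈ Ioo (0:ℝ) 1) (hq : q ∈ Ioo (0:ℝ) 1)
    (hg : ContinuousOn g (Icc vmin vmax)) (hg_pos : ∀ x ∈ Icc vmin vmax, 0 < g x)
    (hg_density : ∫ t in vmin..vmax, g t = 1) (hG : ∀ v, G v = ∫ t in vmin..v, g t)
    (hμ : μ = ∫ t in vmin..vmax, t * g t)
    (hK : ∀ v, K v = (1 - p) * μ + p * ∫ t in vmin..v, t * g t)
    (hD : ∀ v, D v = 1 - p + p * G v) {P : ℝ → ℝ → ℝ}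
    (hP : ∀ s v, P s v =
      (q * s * (1 - p * (if v < s then 1 else 0)) + (1 - q) * K v) /
      (q * (1 - p * (if v < s then 1 else 0)) + (1 - q) * D v))
    {v : ℝ} (hv : v ∈ Ioo vmin vmax) (hgap : v * D v ≤ K v) :
    v < q * P v v + (1 - q) * ∫ s in vmin..vmax, P s v * g s := by
  have hab : vmin ≤ vmax := hv.1.le.trans hv.2.le
  have hg₁ : ContinuousOn g (uIcc vmin v) :=
    hg.mono (uIcc_subset_Icc (left_mem_Icc.2 hab) (Ioo_subset_Icc_self hv))
  have hg₂ : ContinuousOn g (uIcc v vmax) :=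
    hg.mono (uIcc_subset_Icc (Ioo_subset_Icc_self hv) (right_mem_Icc.2 hab))
  have hPv : P v v = (q * v + (1 - q) * K v) / (q + (1 - q) * D v) := by simp [hP]
  rw [hPv, integral_nondisclosure_price_mul (P · v) (hP · v) hv.1.le hv.2.le hg₁ hg₂]
  have hsg₁ : IntervalIntegrable (fun t => t * g t) volume vmin v :=
    ContinuousOn.intervalIntegrable (by fun_prop)
  have hsg₂ : IntervalIntegrable (fun t => t * g t) volume v vmax :=
    ContinuousOn.intervalIntegrable (by fun_prop)
  refine lt_expected_price_closed_form hp hq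
    (integral_nonneg hv.1.le fun s hs => (hg_pos s ⟨hs.1, hs.2.trans hv.2.le⟩).le)
    (integral_nonneg hv.2.le fun s hs => (hg_pos s ⟨hv.1.le.trans hs.1, hs.2⟩).le)
    ?_ ?_ (by rw [hD, hG]) hgap ?_
  · rw [integral_add_adjacent_intervals hg₁.intervalIntegrable hg₂.intervalIntegrable,
      hg_density]
  · rw [hK, hμ, ← integral_add_adjacent_intervals hsg₁ hsg₂]
  · have hB : 0 < ∫ s in v..vmax, (s - v) * g s :=
      intervalIntegral_pos_of_pos_on (ContinuousOn.intervalIntegrable (by fun_prop))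
        (fun s hs => mul_pos (sub_pos.2 hs.1) (hg_pos s ⟨hv.1.le.trans hs.1.le, hs.2.le⟩)) hv.2
    rw [integral_sub_mul v hg₂] at hB
    linarith

end Model

theorem nondisclosure_payoff_exceeds_benchmark_general
    (vmin vmax : ℝ)
    (p q : ℝ) (hp : p ∈ Set.Ioo (0:ℝ) 1) (hq : q ∈ Set.Ioo (0:ℝ) 1)
    (g : ℝ → ℝ)
    (hg_cont : ContinuousOn g (Set.Icc vmin vmax))
    (hg_pos : ∀ x ∈ Set.Icc vmin vmax, 0 < g x)
    (hg_density : ∫ t in vmin..vmax, g t = 1)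
    (G : ℝ → ℝ) (hG : ∀ v, G v = ∫ t in vmin..v, g t)
    (μ : ℝ) (hμ : μ = ∫ t in vmin..vmax, t * g t)
    (K D : ℝ → ℝ)
    (hK : ∀ v, K v = (1 - p) * μ + p * ∫ t in vmin..v, t * g t)
    (hD : ∀ v, D v = 1 - p + p * G v)
    (P : ℝ → ℝ → ℝ)   -- P s v̂ : nondisclosure price given signal s, threshold v̂
    (hP : ∀ s v, P s v =
      (q * s * (1 - p * (if v < s then 1 else 0)) + (1 - q) * K v) /
      (q * (1 - p * (if v < s then 1 else 0)) + (1 - q) * D v))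
    (vB : ℝ) (hvB_mem : vB ∈ Set.Ioo vmin vmax)
    (hvB : vB = K vB / D vB) :
    q * P vB vB + (1 - q) * (∫ s in vmin..vmax, P s vB * g s) > vB ∧
    ∀ vE : ℝ, vE ∈ Set.Ioc vmin vmax →
      vE = q * P vE vE + (1 - q) * (∫ s in vmin..vmax, P s vE * g s) →
      vB < vE := by
  have key : ∀ v ∈ Ioc vmin vB, v < q * P v v + (1 - q) * ∫ s in vmin..vmax, P s v * g s :=
    fun v hv => lt_expected_nondisclosure_price hp hq hg_cont hg_pos hg_density hG hμ hK hD hP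
      ⟨hv.1, hv.2.trans_lt hvB_mem.2⟩
      (mul_D_le_K_of_le_benchmark hp hg_cont hg_pos hG hK hD hvB_mem.2.le hvB ⟨hv.1.le, hv.2⟩)
  refine ⟨key vB ⟨hvB_mem.1, le_rfl⟩, fun vE hvE hfix => ?_⟩
  by_contra! hle
  exact (key vE ⟨hvE.1, hle⟩).ne hfix

/-- the expected nondisclosure payoff at the benchmark threshold v^B
strictly exceeds v^B for every q ∈ (0,1); consequently any early-disclosure
indifference threshold v^E satisfies v^E > v^B. -/
theorem nondisclosure_payoff_exceeds_benchmark
    (vmin vmax : ℝ) (hv : vmin < vmax)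
    (p q : ℝ) (hp : p ∈ Set.Ioo (0:ℝ) 1) (hq : q ∈ Set.Ioo (0:ℝ) 1)
    (g : ℝ → ℝ)
    (hg_cont : ContinuousOn g (Set.Icc vmin vmax))
    (hg_pos : ∀ x ∈ Set.Icc vmin vmax, 0 < g x)
    (hg_density : ∫ t in vmin..vmax, g t = 1)
    (hg_logconcave : ∀ x ∈ Set.Icc vmin vmax, ∀ y ∈ Set.Icc vmin vmax,
      ∀ a b : ℝ, 0 ≤ a → 0 ≤ b → a + b = 1 →
        g x ^ a * g y ^ b ≤ g (a * x + b * y))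
    (G : ℝ → ℝ) (hG : ∀ v, G v = ∫ t in vmin..v, g t)
    (μ : ℝ) (hμ : μ = ∫ t in vmin..vmax, t * g t)
    (K D : ℝ → ℝ)
    (hK : ∀ v, K v = (1 - p) * μ + p * ∫ t in vmin..v, t * g t)
    (hD : ∀ v, D v = 1 - p + p * G v)
    (P : ℝ → ℝ → ℝ)   -- P s v̂ : nondisclosure price given signal s, threshold v̂
    (hP : ∀ s v, P s v =
      (q * s * (1 - p * (if v < s then 1 else 0)) + (1 - q) * K v) /
      (q * (1 - p * (if v < s then 1 else 0)) + (1 - q) * D v))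
    (vB : ℝ) (hvB_mem : vB ∈ Set.Ioo vmin vmax)
    (hvB : vB = K vB / D vB)
    (hPvB : P vB vB = vB) :
    q * P vB vB + (1 - q) * (∫ s in vmin..vmax, P s vB * g s) > vB ∧
    ∀ vE : ℝ, vE ∈ Set.Ioc vmin vmax →
      vE = q * P vE vE + (1 - q) * (∫ s in vmin..vmax, P s vE * g s) →
      vB < vE :=
  nondisclosure_payoff_exceeds_benchmark_general vmin vmax p q hp hq g hg_cont hg_pos hg_density G
    hG μ hμ K D hK hD P hP vB hvB_mem hvB
end
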